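/- arXiv:1609.00902 — 13 statements merged into one kernel-verified Lean document; each statement's English description precedes it below -/
import Mathlib

section
/- Let x, y, z be positive real numbers with xyz = 1. Then (x-1)/(x²-x+1) + (y-1)/(y²-y+1) + (z-1)/(z²-z+1) ≤ 0. -/
/-!
Write `f t = (t - 1) / (t ^ 2 - t + 1)`. Since `f (1 / t) = -t (t - 1) / (t ^ 2 - t + 1)`,
substituting `z = 1 / (x y)` turns the inequality into `f x + f y ≤ p (p - 1) / (p ^ 2 - p + 1)`
with `p = x y`. After clearing the positive denominators and writing `s = x + y`, the difference
of the two sides is `((p - 1) (p - s + 1)) ^ 2 + T(s, p)` with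
`T(s, p) = p²s² - 3p²s + 1 - 3p + 6p² - 2p³`, which is nonnegative as soon as `4 p ≤ s ^ 2`,
i.e. whenever `s` and `p` are the sum and product of two reals.
-/

noncomputable def damascusTerm (t : ℝ) : ℝ := (t - 1) / (t ^ 2 - t + 1)

lemma sq_sub_self_add_one_pos (t : ℝ) : 0 < t ^ 2 - t + 1 := by
  nlinarith [sq_nonneg (2 * t - 1)]

lemma damascusTerm_inv {t : ℝ} (ht : t ≠ 0) :
    damascusTerm t⁻¹ = -(t * (t - 1) / (t ^ 2 - t + 1)) := by
  have := (sq_sub_self_add_one_pos t).ne'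
  unfold damascusTerm
  field_simp
  ring

lemma damascus_poly_nonneg {s p : ℝ} (hsp : 4 * p ≤ s ^ 2) :
    0 ≤ p ^ 2 * s ^ 2 - 3 * p ^ 2 * s + 1 - 3 * p + 6 * p ^ 2 - 2 * p ^ 3 := by
  nlinarith [sq_nonneg (p * s - p - 1), sq_nonneg (p * s - 2 * p), sq_nonneg (p - 1),
    mul_nonneg (sq_nonneg p) (sub_nonneg.2 hsp)]

lemma damascusTerm_add_le (x y : ℝ) :
    damascusTerm x + damascusTerm y ≤ x * y * (x * y - 1) / ((x * y) ^ 2 - x * y + 1) := by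
  have hx := sq_sub_self_add_one_pos x
  have hy := sq_sub_self_add_one_pos y
  rw [damascusTerm, damascusTerm, div_add_div _ _ hx.ne' hy.ne',
    div_le_div_iff₀ (mul_pos hx hy) (sq_sub_self_add_one_pos _)]
  have hT := damascus_poly_nonneg (s := x + y) (p := x * y) (by linarith [sq_nonneg (x - y)])
  linear_combination hT + sq_nonneg ((x * y - 1) * (x * y - x - y + 1))

theorem damascus_inequality_general (x y z : ℝ)
    (h : x * y * z = 1) :
    (x - 1) / (x ^ 2 - x + 1) + (y - 1) / (y ^ 2 - y + 1) + (z - 1) / (z ^ 2 - z + 1) ≤ 0 := by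
  obtain rfl : z = (x * y)⁻¹ := eq_inv_of_mul_eq_one_right h
  have hpair := damascusTerm_add_le x y
  have hz := damascusTerm_inv (left_ne_zero_of_mul_eq_one h)
  unfold damascusTerm at hpair hz
  linarith

theorem damascus_inequality (x y z : ℝ) (hx : 0 < x) (hy : 0 < y) (hz : 0 < z)
    (h : x * y * z = 1) :
    (x - 1) / (x ^ 2 - x + 1) + (y - 1) / (y ^ 2 - y + 1) + (z - 1) / (z ^ 2 - z + 1) ≤ 0 :=
  damascus_inequality_general x y z h
end

section
/- Let x, y, z be positive real numbers with xyz = 1. Then x² + y² + z² - 3(x + y + z) + 6 ≥ 0. -/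
theorem klamkin_type_inequality (x y z : ℝ) (hx : 0 < x) (hy : 0 < y) (hz : 0 < z)
    (h : x * y * z = 1) :
    x ^ 2 + y ^ 2 + z ^ 2 - 3 * (x + y + z) + 6 ≥ 0 := by
  have hs : x + y + z ≥ 3 := by
    nlinarith [sq_nonneg (x - y), sq_nonneg (y - z), sq_nonneg (x - z),
      sq_nonneg (x + y + z - 3), mul_pos hx hy, mul_pos hy hz, mul_pos hx hz,
      mul_pos (mul_pos hx hy) hz]
  -- Schur's inequality (t = 1)
  have hschur : x * (x - y) * (x - z) + y * (y - x) * (y - z) + z * (z - x) * (z - y) ≥ 0 := by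
    rcases le_total x y with hxy | hxy <;> rcases le_total y z with hyz | hyz <;>
      rcases le_total x z with hxz | hxz <;>
      nlinarith [sq_nonneg (x - y), sq_nonneg (y - z), sq_nonneg (x - z),
        mul_nonneg hx.le hy.le, mul_nonneg hy.le hz.le, mul_nonneg hx.le hz.le]
  nlinarith [hs, hschur, sq_nonneg (x + y + z - 3), mul_pos hx hy, mul_pos hy hz,
    mul_pos hx hz, sq_nonneg (x + y + z)]
end

section
/- Let x, y, z be positive real numbers with xyz = 1. Then 1/(x²-x+1) + 1/(y²-y+1) + 1/(z²-z+1) ≤ 3. -/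
private lemma Pnn (x y : ℝ) :
    0 ≤ 1 - 2*y + 2*y^2 - 2*x + 2*x*y - x*y^2 - 2*x*y^3 + 2*x^2 - x^2*y + 2*x^2*y^3 + x^2*y^4
      - 2*x^3*y + 2*x^3*y^2 - x^3*y^3 - 2*x^3*y^4 + x^4*y^2 - 2*x^4*y^3 + 2*x^4*y^4 := by
  have hA : (0:ℝ) < (x*y-1)^2 + 1 := by positivity
  have t1 : (0:ℝ) ≤ 3*((x*y-1)^2+1)^2*(x-y)^2 := by positivity
  have t2 : (0:ℝ) ≤ (3*((x*y-1)^2+1)*(x+y) - 2*(2*(x*y)^3-2*(x*y)^2+x*y+2))^2 := sq_nonneg _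
  have h3 : (0:ℝ) ≤ (x*y)^2 - x*y + 1 := by nlinarith [sq_nonneg (x*y - 1/2)]
  have t3 : (0:ℝ) ≤ 8*((x*y)^2-x*y+1)*(x*y-1)^4 :=
    mul_nonneg (mul_nonneg (by norm_num) h3) (by positivity)
  nlinarith [hA, t1, t2, t3, mul_pos hA hA]

theorem inv_quadratic_sum_le_three (x y z : ℝ) (hx : 0 < x) (hy : 0 < y) (hz : 0 < z)
    (h : x * y * z = 1) :
    1 / (x ^ 2 - x + 1) + 1 / (y ^ 2 - y + 1) + 1 / (z ^ 2 - z + 1) ≤ 3 := by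
  have ha : (0:ℝ) < x ^ 2 - x + 1 := by nlinarith [sq_nonneg (x - 1/2)]
  have hb : (0:ℝ) < y ^ 2 - y + 1 := by nlinarith [sq_nonneg (y - 1/2)]
  have hc : (0:ℝ) < z ^ 2 - z + 1 := by nlinarith [sq_nonneg (z - 1/2)]
  have hP := Pnn x y
  have key : (3*((x^2-x+1)*(y^2-y+1)*(z^2-z+1))
      - ((x^2-x+1)*(y^2-y+1) + (y^2-y+1)*(z^2-z+1) + (z^2-z+1)*(x^2-x+1))) * (x*y)^2
      = 1 - 2*y + 2*y^2 - 2*x + 2*x*y - x*y^2 - 2*x*y^3 + 2*x^2 - x^2*y + 2*x^2*y^3 + x^2*y^4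
      - 2*x^3*y + 2*x^3*y^2 - x^3*y^3 - 2*x^3*y^4 + x^4*y^2 - 2*x^4*y^3 + 2*x^4*y^4 := by
    linear_combination (1 - 2*y + 2*y^2 - 2*x + 2*x*y + x*y*z - x*y^2 - 2*x*y^2*z - 2*x*y^3
      + 2*x*y^3*z + 2*x^2 - x^2*y - 2*x^2*y*z + 3*x^2*y^2*z + 3*x^2*y^3 - 3*x^2*y^3*z
      - 2*x^3*y + 2*x^3*y*z + 3*x^3*y^2 - 3*x^3*y^2*z - 3*x^3*y^3 + 3*x^3*y^3*z) * h
  have hxy2 : (0:ℝ) < (x*y)^2 := by positivity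
  have habc : (x^2-x+1)*(y^2-y+1) + (y^2-y+1)*(z^2-z+1) + (z^2-z+1)*(x^2-x+1)
      ≤ 3*((x^2-x+1)*(y^2-y+1)*(z^2-z+1)) := by
    nlinarith [key, hP, hxy2]
  rw [div_add_div _ _ (ne_of_gt ha) (ne_of_gt hb),
    div_add_div _ _ (by positivity) (ne_of_gt hc), div_le_iff₀ (by positivity)]
  nlinarith [habc]
end

section
/- Let x, y, z be positive real numbers with xyz = 1. Then x/(x²-x+1) + y/(y²-y+1) + z/(z²-z+1) ≤ 3. -/
theorem x_over_quadratic_sum_le_three (x y z : ℝ) (hx : 0 < x) (hy : 0 < y) (hz : 0 < z)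
    (h : x * y * z = 1) :
    x / (x ^ 2 - x + 1) + y / (y ^ 2 - y + 1) + z / (z ^ 2 - z + 1) ≤ 3 := by
  have key : ∀ t : ℝ, t / (t ^ 2 - t + 1) ≤ 1 := by
    intro t
    have hd : 0 < t ^ 2 - t + 1 := by nlinarith [sq_nonneg (t - 1), sq_nonneg t]
    rw [div_le_one hd]
    nlinarith [sq_nonneg (t - 1)]
  linarith [key x, key y, key z]
end

section
/- Let x, y, z be positive real numbers with xyz = 1. Then (x-1)/(x²+x+1) + (y-1)/(y²+y+1) + (z-1)/(z²+z+1) ≤ 0. -/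
theorem sub_one_over_plus_quadratic_sum_le_zero (x y z : ℝ) (hx : 0 < x) (hy : 0 < y)
    (hz : 0 < z) (h : x * y * z = 1) :
    (x - 1) / (x ^ 2 + x + 1) + (y - 1) / (y ^ 2 + y + 1) + (z - 1) / (z ^ 2 + z + 1) ≤ 0 := by
  have dx : 0 < x ^ 2 + x + 1 := by positivity
  have dy : 0 < y ^ 2 + y + 1 := by positivity
  have dz : 0 < z ^ 2 + z + 1 := by positivity
  rw [div_add_div _ _ (ne_of_gt dx) (ne_of_gt dy), div_add_div _ _ (ne_of_gt (mul_pos dx dy)) (ne_of_gt dz)]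
  apply div_nonpos_of_nonpos_of_nonneg _ (le_of_lt (mul_pos (mul_pos dx dy) dz))
  nlinarith [sq_nonneg (x*y - 1), sq_nonneg (y*z - 1), sq_nonneg (x*z - 1), sq_nonneg (x - y), sq_nonneg (y - z), sq_nonneg (x - z), sq_nonneg (x + y + z - 3), mul_pos hx hy, mul_pos hy hz, mul_pos hx hz, sq_nonneg (x*y + y*z + x*z - 3), sq_nonneg (x*y*z - 1)]
end

section
/- Let x, y, z be positive real numbers with xyz = 1. Then 1/(x²+x+1) + 1/(y²+y+1) + 1/(z²+z+1) ≥ 1. -/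
theorem inv_plus_quadratic_sum_ge_one (x y z : ℝ) (hx : 0 < x) (hy : 0 < y) (hz : 0 < z)
    (h : x * y * z = 1) :
    1 / (x ^ 2 + x + 1) + 1 / (y ^ 2 + y + 1) + 1 / (z ^ 2 + z + 1) ≥ 1 := by
  have hx1 : 0 < x ^ 2 + x + 1 := by positivity
  have hy1 : 0 < y ^ 2 + y + 1 := by positivity
  have hz1 : 0 < z ^ 2 + z + 1 := by positivity
  have key : (y ^ 2 + y + 1) * (z ^ 2 + z + 1) + (x ^ 2 + x + 1) * (z ^ 2 + z + 1)
      + (x ^ 2 + x + 1) * (y ^ 2 + y + 1)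
      - (x ^ 2 + x + 1) * (y ^ 2 + y + 1) * (z ^ 2 + z + 1)
      = x ^ 2 + y ^ 2 + z ^ 2 - x * y - y * z - x * z := by
    linear_combination (-(2 + x + y + z + x * y + y * z + x * z + x * y * z)) * h
  rw [ge_iff_le, div_add_div _ _ (ne_of_gt hx1) (ne_of_gt hy1),
    div_add_div _ _ (ne_of_gt (mul_pos hx1 hy1)) (ne_of_gt hz1),
    le_div_iff₀ (mul_pos (mul_pos hx1 hy1) hz1)]
  nlinarith [key, sq_nonneg (x - y), sq_nonneg (y - z), sq_nonneg (x - z)]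
end

section
/- Let x, y, z be positive real numbers with xyz = 1. Then x/(x²+x+1) + y/(y²+y+1) + z/(z²+z+1) ≤ 1. -/
theorem x_over_plus_quadratic_sum_le_one (x y z : ℝ) (hx : 0 < x) (hy : 0 < y) (hz : 0 < z)
    (h : x * y * z = 1) :
    x / (x ^ 2 + x + 1) + y / (y ^ 2 + y + 1) + z / (z ^ 2 + z + 1) ≤ 1 := by
  have key : ∀ t : ℝ, 0 < t → t / (t ^ 2 + t + 1) ≤ 1 / 3 := by
    intro t ht
    rw [div_le_div_iff₀ (by positivity) (by norm_num)]
    nlinarith [sq_nonneg (t - 1)]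
  linarith [key x hx, key y hy, key z hz]
end

section
/- Let x, y, z be positive real numbers with xyz = 1. Then (x+1)/(x²+x+1) + (y+1)/(y²+y+1) + (z+1)/(z²+z+1) ≤ 2. -/
lemma aux (a b c : ℝ) (ha : 0 < a) (hb : 0 < b) (hc : 0 < c) :
    1 ≤ a^2/(a^2+a*b+b^2) + b^2/(b^2+b*c+c^2) + c^2/(c^2+c*a+a^2) := by
  have hA : (0:ℝ) < a^2+a*b+b^2 := by positivity
  have hB : (0:ℝ) < b^2+b*c+c^2 := by positivity
  have hC : (0:ℝ) < c^2+c*a+a^2 := by positivity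
  rw [div_add_div _ _ (ne_of_gt hA) (ne_of_gt hB), div_add_div _ _ (by positivity) (ne_of_gt hC),
    le_div_iff₀ (by positivity)]
  nlinarith [sq_nonneg (a^2*b - b^2*c), sq_nonneg (b^2*c - c^2*a), sq_nonneg (c^2*a - a^2*b)]

theorem add_one_over_plus_quadratic_sum_le_two (x y z : ℝ) (hx : 0 < x) (hy : 0 < y)
    (hz : 0 < z) (h : x * y * z = 1) :
    (x + 1) / (x ^ 2 + x + 1) + (y + 1) / (y ^ 2 + y + 1) + (z + 1) / (z ^ 2 + z + 1) ≤ 2 := by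
  have hx1 : (0:ℝ) < x ^ 2 + x + 1 := by positivity
  have hy1 : (0:ℝ) < y ^ 2 + y + 1 := by positivity
  have hz1 : (0:ℝ) < z ^ 2 + z + 1 := by positivity
  have key := aux x 1 (1/y) hx one_pos (by positivity)
  have e1 : x^2/(x^2+x*1+1^2) = x^2/(x^2+x+1) := by ring_nf
  have e2 : (1:ℝ)^2/(1^2+1*(1/y)+(1/y)^2) = y^2/(y^2+y+1) := by
    rw [div_eq_div_iff (by positivity) (by positivity)]
    field_simp
  have hzz : z = 1/(x*y) := by field_simp; nlinarith [h]
  have e3 : (1/y)^2/((1/y)^2+(1/y)*x+x^2) = z^2/(z^2+z+1) := by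
    rw [div_eq_div_iff (by positivity) (by positivity), hzz]
    field_simp
  rw [e1, e2, e3] at key
  have : 2 - ((x + 1) / (x ^ 2 + x + 1) + (y + 1) / (y ^ 2 + y + 1) + (z + 1) / (z ^ 2 + z + 1))
      = (x^2/(x^2+x+1) + y^2/(y^2+y+1) + z^2/(z^2+z+1)) - 1 := by
    field_simp
    ring
  linarith [key, this]
end

section
/- Let a, b be real numbers and let x, y, z be positive real numbers such that for all real t, t³ + a·t² + b·t - 1 = (t - x)(t - y)(t - z). Then (x-1)/(x²-x+1) + (y-1)/(y²-y+1) + (z-1)/(z²-z+1) ≤ 0. -/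
set_option maxHeartbeats 1600000

lemma schur_aux (x y z : ℝ) (hx : 0 ≤ x) (hy : 0 ≤ y) (hz : 0 ≤ z) :
    0 ≤ x * (x - y) * (x - z) + y * (y - x) * (y - z) + z * (z - x) * (z - y) := by
  rcases le_total x y with h1 | h1 <;> rcases le_total y z with h2 | h2 <;>
    rcases le_total x z with h3 | h3 <;>
    nlinarith [mul_nonneg hx hy, mul_nonneg hy hz, mul_nonneg hx hz, sq_nonneg (x - y),
      sq_nonneg (y - z), sq_nonneg (x - z), mul_nonneg (mul_nonneg hx hy) hz]

theorem damascus_cubic_roots (a b : ℝ) (x y z : ℝ) (hx : 0 < x) (hy : 0 < y) (hz : 0 < z)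
    (h : ∀ t : ℝ, t ^ 3 + a * t ^ 2 + b * t - 1 = (t - x) * (t - y) * (t - z)) :
    (x - 1) / (x ^ 2 - x + 1) + (y - 1) / (y ^ 2 - y + 1) + (z - 1) / (z ^ 2 - z + 1) ≤ 0 := by
  have hxyz : x * y * z = 1 := by linear_combination h 0
  have dx : 0 < x ^ 2 - x + 1 := by nlinarith [sq_nonneg (x - 1)]
  have dy : 0 < y ^ 2 - y + 1 := by nlinarith [sq_nonneg (y - 1)]
  have dz : 0 < z ^ 2 - z + 1 := by nlinarith [sq_nonneg (z - 1)]
  have hu0 : 0 < x + y + z := by positivity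
  have hcube : 27 ≤ (x + y + z) ^ 3 := by
    nlinarith [mul_nonneg hz.le (sq_nonneg (x - y)), mul_nonneg hx.le (sq_nonneg (y - z)),
      mul_nonneg hy.le (sq_nonneg (x - z)), hxyz]
  have hu3 : 3 ≤ x + y + z := by
    nlinarith [hcube, sq_nonneg (x + y + z - 3), sq_nonneg (x + y + z + 3), hu0]
  have hS : 0 ≤ (x + y + z) ^ 3 + 9 - 4 * (x + y + z) * (x * y + y * z + x * z) := by
    nlinarith [schur_aux x y z hx.le hy.le hz.le, hxyz]
  have key : 0 ≤ (x + y + z - (x * y + y * z + x * z)) ^ 2 + (x + y + z) ^ 2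
      - 3 * (x + y + z) - 2 * (x * y + y * z + x * z) + 6 := by
    have q1 : 0 ≤ 2 * (x + y + z) * (x + y + z - (x * y + y * z + x * z)) ^ 2 := by positivity
    have q2 : 0 ≤ (x + y + z - 3) * ((x + y + z) ^ 2 - 3 * (x + y + z) + 3) := by
      apply mul_nonneg (by linarith)
      nlinarith [sq_nonneg (x + y + z - 3 / 2)]
    have h2u : 0 ≤ 2 * (x + y + z) * ((x + y + z - (x * y + y * z + x * z)) ^ 2
        + (x + y + z) ^ 2 - 3 * (x + y + z) - 2 * (x * y + y * z + x * z) + 6) := by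
      linarith [q1, q2, hS]
    nlinarith [h2u, hu0]
  rw [div_add_div _ _ dx.ne' dy.ne', div_add_div _ _ (mul_pos dx dy).ne' dz.ne',
    div_nonpos_iff]
  right
  refine ⟨?_, by positivity⟩
  have hN : ((x - 1) * (y ^ 2 - y + 1) + (x ^ 2 - x + 1) * (y - 1)) * (z ^ 2 - z + 1) +
      (x ^ 2 - x + 1) * (y ^ 2 - y + 1) * (z - 1) =
      -((x + y + z - (x * y + y * z + x * z)) ^ 2 + (x + y + z) ^ 2
        - 3 * (x + y + z) - 2 * (x * y + y * z + x * z) + 6) := by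
    linear_combination (x * y + y * z + x * z - 3) * hxyz
  rw [hN]
  linarith [key]
end

section
/- Let x, y, z be positive real numbers with xyz = 1 and let α be a real number with 0 < α < 1. Then (x/(x²+x+1))^α + (y/(y²+y+1))^α + (z/(z²+z+1))^α ≤ 3 - 2α, where powers are real (rpow) powers. -/
open Real

lemma base_le_third {x : ℝ} (hx : 0 < x) : x / (x ^ 2 + x + 1) ≤ 1 / 3 := by
  rw [div_le_div_iff₀ (by nlinarith) (by norm_num)]
  nlinarith [sq_nonneg (x - 1)]

lemma term_le {x α : ℝ} (hx : 0 < x) (hα0 : 0 < α) :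
    (x / (x ^ 2 + x + 1)) ^ α ≤ (1 / 3 : ℝ) ^ α :=
  Real.rpow_le_rpow (by positivity) (base_le_third hx) hα0.le

theorem rpow_x_over_plus_quadratic (x y z α : ℝ) (hx : 0 < x) (hy : 0 < y) (hz : 0 < z)
    (h : x * y * z = 1) (hα0 : 0 < α) (hα1 : α < 1) :
    (x / (x ^ 2 + x + 1)) ^ α + (y / (y ^ 2 + y + 1)) ^ α + (z / (z ^ 2 + z + 1)) ^ α
      ≤ 3 - 2 * α := by
  have h3 : (3 : ℝ) * (1 / 3 : ℝ) ^ α ≤ 3 - 2 * α := by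
    have hb : ((1 : ℝ) + 2) ^ (1 - α) ≤ 1 + (1 - α) * 2 :=
      rpow_one_add_le_one_add_mul_self (by norm_num) (by linarith) (by linarith)
    have : (3 : ℝ) * (1 / 3 : ℝ) ^ α = (3 : ℝ) ^ (1 - α) := by
      rw [Real.rpow_sub (by norm_num), Real.rpow_one, one_div,
        Real.inv_rpow (by norm_num)]
      field_simp
    rw [this]
    calc (3 : ℝ) ^ (1 - α) = ((1 : ℝ) + 2) ^ (1 - α) := by norm_num
      _ ≤ 1 + (1 - α) * 2 := hb
      _ = 3 - 2 * α := by ring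
  have := term_le hx hα0
  have := term_le hy hα0
  have := term_le hz hα0
  linarith
end

section
/- Let x, y, z be positive real numbers with xyz = 1 and let α be a real number with α > 1 or α < 0. Then (1/(x²+x+1))^α + (1/(y²+y+1))^α + (1/(z²+z+1))^α ≥ 3 - 2α, where powers are real (rpow) powers. -/
theorem rpow_inv_plus_quadratic (x y z α : ℝ) (hx : 0 < x) (hy : 0 < y) (hz : 0 < z)
    (h : x * y * z = 1) (hα : α > 1 ∨ α < 0) :
    (1 / (x ^ 2 + x + 1)) ^ α + (1 / (y ^ 2 + y + 1)) ^ α + (1 / (z ^ 2 + z + 1)) ^ α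
      ≥ 3 - 2 * α := by
  have px : (0:ℝ) < x ^ 2 + x + 1 := by positivity
  have py : (0:ℝ) < y ^ 2 + y + 1 := by positivity
  have pz : (0:ℝ) < z ^ 2 + z + 1 := by positivity
  have tx : (0:ℝ) < 1 / (x ^ 2 + x + 1) := by positivity
  have ty : (0:ℝ) < 1 / (y ^ 2 + y + 1) := by positivity
  have tz : (0:ℝ) < 1 / (z ^ 2 + z + 1) := by positivity
  rcases hα with hα | hα
  · -- α > 1 : Bernoulli + the classic inequality Σ 1/(x²+x+1) ≥ 1
    have key : (y^2+y+1)*(z^2+z+1) + (x^2+x+1)*(z^2+z+1) + (x^2+x+1)*(y^2+y+1)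
        - (x^2+x+1)*(y^2+y+1)*(z^2+z+1) = x^2+y^2+z^2 - x*y - y*z - x*z := by
      linear_combination (-(x*y*z) - x*y - x*z - x - y*z - y - z - 2) * h
    have hkey : (y^2+y+1)*(z^2+z+1) + (x^2+x+1)*(z^2+z+1) + (x^2+x+1)*(y^2+y+1)
        - (x^2+x+1)*(y^2+y+1)*(z^2+z+1) ≥ 0 := by
      rw [key]; nlinarith [sq_nonneg (x-y), sq_nonneg (y-z), sq_nonneg (x-z)]
    have T1 : 1 / (x ^ 2 + x + 1) + 1 / (y ^ 2 + y + 1) + 1 / (z ^ 2 + z + 1) ≥ 1 := by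
      rw [ge_iff_le, div_add_div _ _ (ne_of_gt px) (ne_of_gt py),
        div_add_div _ _ (by positivity) (ne_of_gt pz), le_div_iff₀ (by positivity)]
      nlinarith [hkey]
    have bern : ∀ t : ℝ, 0 < t → 1 + α * (t - 1) ≤ t ^ α := by
      intro t ht
      have hs : (-1:ℝ) ≤ t - 1 := by linarith
      have := one_add_mul_self_le_rpow_one_add hs (le_of_lt hα)
      have e : (1:ℝ) + (t - 1) = t := by ring
      rwa [e] at this
    have b1 := bern _ tx
    have b2 := bern _ ty
    have b3 := bern _ tz
    nlinarith [T1, b1, b2, b3]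
  · -- α < 0 : use t^α = exp(α log t) ≥ 1 + α log t and x²+x+1 ≥ 3x
    have expbd : ∀ t : ℝ, 0 < t → Real.log t * α + 1 ≤ t ^ α := by
      intro t ht
      rw [Real.rpow_def_of_pos ht]
      exact Real.add_one_le_exp _
    have logbd : ∀ t : ℝ, 0 < t → Real.log (t ^ 2 + t + 1) ≥ Real.log 3 + Real.log t := by
      intro t ht
      have h3t : 3 * t ≤ t ^ 2 + t + 1 := by nlinarith [sq_nonneg (t - 1)]
      calc Real.log 3 + Real.log t = Real.log (3 * t) := (Real.log_mul (by norm_num) (ne_of_gt ht)).symm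
        _ ≤ Real.log (t ^ 2 + t + 1) := Real.log_le_log (by positivity) h3t
    have lsum : Real.log x + Real.log y + Real.log z = 0 := by
      rw [← Real.log_mul (by positivity) (ne_of_gt hy), ← Real.log_mul (by positivity) (ne_of_gt hz), h,
        Real.log_one]
    have log3 : (1:ℝ) ≤ Real.log 3 := by
      rw [Real.le_log_iff_exp_le (by norm_num)]
      calc Real.exp 1 ≤ 2.7182818286 := le_of_lt Real.exp_one_lt_d9
        _ ≤ 3 := by norm_num
    have e1 := expbd _ tx
    have e2 := expbd _ ty
    have e3 := expbd _ tz
    have l1 : Real.log (1 / (x ^ 2 + x + 1)) = -Real.log (x ^ 2 + x + 1) := by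
      rw [one_div, Real.log_inv]
    have l2 : Real.log (1 / (y ^ 2 + y + 1)) = -Real.log (y ^ 2 + y + 1) := by
      rw [one_div, Real.log_inv]
    have l3 : Real.log (1 / (z ^ 2 + z + 1)) = -Real.log (z ^ 2 + z + 1) := by
      rw [one_div, Real.log_inv]
    rw [l1] at e1; rw [l2] at e2; rw [l3] at e3
    have g1 := logbd _ hx
    have g2 := logbd _ hy
    have g3 := logbd _ hz
    have S2 : (2:ℝ) ≤ Real.log (x ^ 2 + x + 1) + Real.log (y ^ 2 + y + 1)
        + Real.log (z ^ 2 + z + 1) := by linarith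
    have hmul : (-α) * 2 ≤ (-α) * (Real.log (x ^ 2 + x + 1) + Real.log (y ^ 2 + y + 1)
        + Real.log (z ^ 2 + z + 1)) :=
      mul_le_mul_of_nonneg_left S2 (by linarith)
    nlinarith [e1, e2, e3, hmul]
end

section
/- Let F : ℝ × ℝ → ℝ be a function such that F(x+y+z, xy+yz+zx) ≥ 0 for all positive real numbers x, y, z with xyz = 1. Then F(xy+yz+zx, x+y+z) ≥ 0 for all positive real numbers x, y, z with xyz = 1. -/
theorem symmetric_swap (F : ℝ × ℝ → ℝ)
    (hF : ∀ x y z : ℝ, 0 < x → 0 < y → 0 < z → x * y * z = 1 →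
      F (x + y + z, x * y + y * z + z * x) ≥ 0) :
    ∀ x y z : ℝ, 0 < x → 0 < y → 0 < z → x * y * z = 1 →
      F (x * y + y * z + z * x, x + y + z) ≥ 0 := by
  intro x y z hx hy hz h
  have := hF (x*y) (y*z) (z*x) (by positivity) (by positivity) (by positivity)
    (by nlinarith [sq_nonneg (x*y*z)])
  have e1 : x*y * (y*z) + y*z * (z*x) + z*x * (x*y) = x + y + z := by nlinarith
  rw [e1] at this
  exact this
end

section
/- Let F : ℝ × ℝ → ℝ be a function such that F(x+y+z, xy+yz+zx) ≥ 0 for all positive real numbers x, y, z with xyz = 1. Then F(q² - 2p, p² - 2q) ≥ 0 for all positive real numbers x, y, z with xyz = 1, where p = x+y+z and q = xy+yz+zx. -/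
theorem symmetric_transform (F : ℝ × ℝ → ℝ)
    (hF : ∀ x y z : ℝ, 0 < x → 0 < y → 0 < z → x * y * z = 1 →
      F (x + y + z, x * y + y * z + z * x) ≥ 0) :
    ∀ x y z : ℝ, 0 < x → 0 < y → 0 < z → x * y * z = 1 →
      F ((x * y + y * z + z * x) ^ 2 - 2 * (x + y + z),
         (x + y + z) ^ 2 - 2 * (x * y + y * z + z * x)) ≥ 0 := by
  intro x y z hx hy hz hxyz
  have h := hF (x * y / z) (y * z / x) (z * x / y)
    (by positivity) (by positivity) (by positivity)
    (by field_simp; nlinarith [hxyz])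
  convert h using 3 <;> field_simp <;> nlinarith [hxyz, sq_nonneg x, mul_pos hx hy]
end
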